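/- Let q be a prime power, 2 ≤ t ≤ q - 1, V = F_q × F_{q^2} × ⋯ × F_{q^t}, and P(v) = v_1 + N_2(v_2) + ⋯ + N_t(v_t). Then the fibers {P⁻¹(u) : u ∈ F_q} form a partition of V into q pairwise disjoint sets, each of which is t-line evasive (every affine line of V meets each fiber in at most t points). -/

import Mathlib

open Polynomial

lemma my_eval_charpoly {n : Type*} [DecidableEq n] [Fintype n] {K : Type*} [CommRing K]
    (M : Matrix n n K) (x : K) :
    (Matrix.charpoly M).eval x = (x • (1 : Matrix n n K) - M).det := by
  rw [Matrix.charpoly, _root_.eval_det, Matrix.matPolyEquiv_charmatrix]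
  simp [Matrix.scalar, Algebra.algebraMap_eq_smul_one]

lemma exists_norm_poly (K L : Type*) [Field K] [Field L] [Algebra K L]
    [FiniteDimensional K L] (a c : L) :
    ∃ p : K[X], (∀ x : K, p.eval x = Algebra.norm K (x • a + c)) ∧
      (a = 0 → p.natDegree = 0) ∧
      (a ≠ 0 → p.natDegree = Module.finrank K L ∧ p.leadingCoeff = Algebra.norm K a) := by
  by_cases ha : a = 0
  · exact ⟨C (Algebra.norm K c), fun x => by simp [ha], fun _ => natDegree_C _,
      fun h => absurd ha h⟩
  · have hna : Algebra.norm K a ≠ 0 := by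
      rwa [Algebra.norm_ne_zero_iff]
    set b := Module.finBasis K L with hb
    set d := a⁻¹ * c with hd
    set A := LinearMap.toMatrix b b (Algebra.lmul K L d) with hA
    refine ⟨C (Algebra.norm K a) * Matrix.charpoly (-A), fun x => ?_, fun h => absurd h ha,
      fun _ => ⟨?_, ?_⟩⟩
    · have key : x • a + c = a * (algebraMap K L x + d) := by
        rw [hd, mul_add, ← mul_assoc, mul_inv_cancel₀ ha, one_mul, mul_comm a,
          ← Algebra.smul_def]
      rw [eval_mul, eval_C, key, map_mul, my_eval_charpoly, sub_neg_eq_add]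
      congr 1
      rw [Algebra.norm_apply, ← LinearMap.det_toMatrix b]
      congr 1
      rw [map_add, AlgHom.commutes, Algebra.algebraMap_eq_smul_one, map_add, map_smul,
        LinearMap.toMatrix_one]
    · rw [natDegree_C_mul hna, Matrix.charpoly_natDegree_eq_dim]
      simp
    · rw [leadingCoeff_mul, leadingCoeff_C, (Matrix.charpoly_monic _).leadingCoeff, mul_one]


/-- With `V = F_q × F_{q²} × ⋯ × F_{q^t}` and
`P(v) = v₁ + N₂(v₂) + ⋯ + N_t(v_t)`, the fibers `{P⁻¹(u) : u ∈ F_q}` form a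
partition of `V` into `q` pairwise disjoint sets, each of which is `t`-line
evasive: every affine line `{x•a + b : x ∈ F_q}` (with `a ≠ 0`) meets each
fiber in at most `t` points. -/
theorem stmt4 (q t : ℕ) (hq : IsPrimePow q) (ht : 2 ≤ t) (htq : t ≤ q - 1)
    (K : Type) [Field K] [Fintype K] (hK : Fintype.card K = q)
    (L : Fin t → Type) [∀ i, Field (L i)] [∀ i, Fintype (L i)] [∀ i, Algebra K (L i)]
    (hL : ∀ i : Fin t, Fintype.card (L i) = q ^ ((i : ℕ) + 1))
    (P : (∀ i, L i) → K) (hP : ∀ v, P v = ∑ i, Algebra.norm K (v i)) :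
    Nat.card K = q ∧
    (∀ u u' : K, u ≠ u' → Disjoint (P ⁻¹' {u}) (P ⁻¹' {u'})) ∧
    (⋃ u : K, P ⁻¹' {u}) = Set.univ ∧
    (∀ u : K, ∀ a b : ∀ i, L i, a ≠ 0 →
      Set.ncard {v ∈ P ⁻¹' {u} | ∃ x : K, v = x • a + b} ≤ t) := by
  have hq2 : 2 ≤ q := hq.two_le
  refine ⟨by rw [Nat.card_eq_fintype_card, hK], ?_, ?_, ?_⟩
  · intro u u' huu'
    rw [Set.disjoint_left]
    rintro v hv hv'
    simp only [Set.mem_preimage, Set.mem_singleton_iff] at hv hv'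
    exact huu' (hv ▸ hv')
  · ext v
    simp only [Set.mem_iUnion, Set.mem_preimage, Set.mem_singleton_iff, Set.mem_univ, iff_true]
    exact ⟨P v, rfl⟩
  · intro u a b hab
    classical
    have hfr : ∀ i, Module.finrank K (L i) = (i : ℕ) + 1 := by
      intro i
      have h1 := Module.card_eq_pow_finrank (K := K) (V := L i)
      rw [hK, hL i] at h1
      exact (Nat.pow_right_injective hq2 h1.symm)
    choose p hpe hp0 hpl using fun i => exists_norm_poly K (L i) (a i) (b i)
    set f : Polynomial K := (∑ i, p i) - C u with hf
    -- choose maximal index with a j ≠ 0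
    have hs : (Finset.univ.filter (fun i => a i ≠ 0)).Nonempty := by
      by_contra h
      rw [Finset.not_nonempty_iff_eq_empty, Finset.filter_eq_empty_iff] at h
      exact hab (funext fun i => by simpa using h (Finset.mem_univ i))
    set j := (Finset.univ.filter (fun i => a i ≠ 0)).max' hs with hjdef
    have hj : a j ≠ 0 := by
      have := (Finset.univ.filter (fun i => a i ≠ 0)).max'_mem hs
      simpa using this
    have hjmax : ∀ i, a i ≠ 0 → i ≤ j := fun i hi =>
      Finset.le_max' _ i (by simpa using hi)
    -- f is nonzero
    have hcoeff : f.coeff ((j : ℕ) + 1) = Algebra.norm K (a j) := by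
      rw [hf, coeff_sub, coeff_C, if_neg (by omega), sub_zero, finset_sum_coeff]
      rw [Finset.sum_eq_single j]
      · obtain ⟨hd, hl⟩ := hpl j hj
        rw [← hfr j, ← hd, ← leadingCoeff, hl]
      · intro i _ hij
        apply coeff_eq_zero_of_natDegree_lt
        by_cases hi : a i = 0
        · rw [hp0 i hi]; omega
        · have hle : i ≤ j := hjmax i hi
          have : (i : ℕ) < (j : ℕ) := lt_of_le_of_ne (by exact_mod_cast hle)
            (fun h => hij (Fin.ext h))
          rw [(hpl i hi).1, hfr i]; omega
      · intro h; exact absurd (Finset.mem_univ j) h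
    have hf0 : f ≠ 0 := fun h =>
      (Algebra.norm_ne_zero_iff.mpr hj) (by rw [← hcoeff, h, coeff_zero])
    have hdeg : f.natDegree ≤ t := by
      apply le_trans (natDegree_sub_le _ _)
      simp only [natDegree_C, max_le_iff]
      refine ⟨Polynomial.natDegree_sum_le_of_forall_le _ _ fun i _ => ?_, Nat.zero_le t⟩
      by_cases hi : a i = 0
      · rw [hp0 i hi]; exact Nat.zero_le t
      · rw [(hpl i hi).1, hfr i]; exact i.2
    -- the set injects into the roots of f
    have hsub : {v ∈ P ⁻¹' {u} | ∃ x : K, v = x • a + b} ⊆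
        (fun x : K => x • a + b) '' ↑f.roots.toFinset := by
      rintro v ⟨hv, x, rfl⟩
      refine ⟨x, ?_, rfl⟩
      simp only [Set.mem_preimage, Set.mem_singleton_iff] at hv
      simp only [Finset.coe_sort_coe, Multiset.mem_toFinset, Finset.mem_coe]
      rw [mem_roots hf0]
      have : f.eval x = P (x • a + b) - u := by
        rw [hf, eval_sub, eval_C, eval_finset_sum, hP]
        congr 1
        refine Finset.sum_congr rfl fun i _ => ?_
        rw [hpe i x]
        simp
      rw [IsRoot.def, this, hv, sub_self]
    calc Set.ncard {v ∈ P ⁻¹' {u} | ∃ x : K, v = x • a + b}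
        ≤ Set.ncard ((fun x : K => x • a + b) '' ↑f.roots.toFinset) :=
          Set.ncard_le_ncard hsub (f.roots.toFinset.finite_toSet.image _)
      _ ≤ Set.ncard (↑f.roots.toFinset : Set K) :=
          Set.ncard_image_le f.roots.toFinset.finite_toSet
      _ = f.roots.toFinset.card := Set.ncard_coe_finset _
      _ ≤ Multiset.card f.roots := Multiset.toFinset_card_le _
      _ ≤ f.natDegree := f.card_roots'
      _ ≤ t := hdeg
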